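/- Let Γ be a discrete subgroup of SL(2,ℝ) containing T = [[1,1],[0,1]], such that every element [[a,b],[c,d]] ∈ Γ with c = 0 equals ±Tⁿ for some integer n. Let x₀ ∈ ℝ and suppose the Ford set F(Γ,x₀) equals the Dirichlet set D(Γ,z₀) for some z₀ ∈ ℍ (i.e. Γ admits a DF domain P := F(Γ,x₀)). Then for every γ ∈ Γ and every v ∈ P with γ•v ∈ P, one has Im(γ•v) = Im(v), and either Re(γ•v) = Re(v) or Re(γ•v) + Re(v) = 2x₀ + 1; that is, every side-pairing of a DF domain identifies each boundary point either with itself or with its mirror image in the vertical line {Re(z) = x₀ + 1/2}. -/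

import Mathlib

open UpperHalfPlane Matrix Complex
open scoped MatrixGroups

/-- The topology on `SL(2,ℝ)` induced from the space of 2×2 real matrices. -/
def slTopology : TopologicalSpace SL(2, ℝ) :=
  TopologicalSpace.induced (fun g => (g : Matrix (Fin 2) (Fin 2) ℝ)) inferInstance

/-- A subgroup of `SL(2,ℝ)` is discrete if it carries the discrete topology as a
subspace of `SL(2,ℝ)`. -/
def IsDiscreteSubgroup (Γ : Subgroup SL(2, ℝ)) : Prop :=
  @DiscreteTopology Γ (TopologicalSpace.induced (Subtype.val : Γ → SL(2, ℝ)) slTopology)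

/-- The Dirichlet set of a subgroup `Γ ≤ SL(2,ℝ)` centered at `z₀ ∈ ℍ`. -/
def dirichletSet (Γ : Subgroup SL(2, ℝ)) (z₀ : ℍ) : Set ℍ :=
  {x : ℍ | ∀ γ ∈ Γ, dist x z₀ ≤ dist x (γ • z₀)}

/-- The Ford set of a subgroup `Γ ≤ SL(2,ℝ)` over the vertical strip `[x₀, x₀+1]`. -/
def fordSet (Γ : Subgroup SL(2, ℝ)) (x₀ : ℝ) : Set ℍ :=
  {z : ℍ | x₀ ≤ z.re ∧ z.re ≤ x₀ + 1 ∧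
    ∀ g ∈ Γ, g 1 0 ≠ 0 → 1 ≤ ‖(g 1 0 : ℂ) * (z : ℂ) + (g 1 1 : ℂ)‖}

/-- The parabolic translation `T = [[1,1],[0,1]]` in `SL(2,ℝ)`. -/
def T : SL(2, ℝ) :=
  ⟨!![1, 1; 0, 1], by norm_num [Matrix.det_fin_two_of]⟩

/-!
Shimura's lemma: in a discrete group containing `T`, every element with `c ≠ 0` has `|c| ≥ 1`;
otherwise the sequence `gₙ₊₁ = gₙ T gₙ⁻¹`, whose lower-left entries have modulus `|c| ^ 2 ^ n`,
would converge to `T` without ever reaching it. Hence the points of height `1` over the strip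
lie in the Ford set, and since they also lie in the Dirichlet set, comparing `z₀` with `T^{±1} z₀`
forces `Re z₀ = x₀ + 1/2`.

For a side-pairing `γ`, either `γ = ±Tⁿ` is a translation, or the Ford inequalities for `γ` at
`v` and for `γ⁻¹` at `γ v` multiply to `1`, so `|c v + d| = 1`; in both cases `Im (γ v) = Im v`.
The Dirichlet inequalities give `d(γ v, z₀) = d(v, z₀)`, which for points of equal height means
`|Re (γ v) - Re z₀| = |Re v - Re z₀|`.
-/

open Filter Topology

lemma coe_smul_eq_div (g : SL(2, ℝ)) (z : ℍ) :
    ((g • z : ℍ) : ℂ) = (g 0 0 * z + g 0 1) / (g 1 0 * z + g 1 1) := by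
  simp [coe_specialLinearGroup_apply]

lemma denom_ne_zero_SL (g : SL(2, ℝ)) (z : ℍ) : (g 1 0 * z + g 1 1 : ℂ) ≠ 0 := by
  simpa [denom] using denom_ne_zero (SpecialLinearGroup.mapGL ℝ g) z

lemma smul_im_eq_div_norm_sq (g : SL(2, ℝ)) (z : ℍ) :
    (g • z).im = z.im / ‖(g 1 0 * z + g 1 1 : ℂ)‖ ^ 2 := by
  rw [MulAction.compHom_smul_def, im_smul_eq_div_normSq, ← Complex.sq_norm]
  simp [denom]

lemma denom_inv_smul_mul_denom (g : SL(2, ℝ)) (z : ℍ) :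
    ((g⁻¹ 1 0 * (g • z : ℍ) + g⁻¹ 1 1) * (g 1 0 * z + g 1 1) : ℂ) = 1 := by
  have hdet : (g 0 0 * g 1 1 - g 0 1 * g 1 0 : ℂ) = 1 := by
    exact_mod_cast (det_fin_two (g : Matrix (Fin 2) (Fin 2) ℝ)).symm.trans g.det_coe
  rw [coe_smul_eq_div, SpecialLinearGroup.SL2_inv_expl]
  simp only [Fin.isValue, cons_val', cons_val_zero, cons_val_fin_one, cons_val_one, ofReal_neg,
    neg_mul]
  field_simp [denom_ne_zero_SL g z]
  linear_combination hdet

lemma neg_smul_SL (g : SL(2, ℝ)) (z : ℍ) : -g • z = g • z := by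
  rw [MulAction.compHom_smul_def, MulAction.compHom_smul_def, ← UpperHalfPlane.neg_smul]
  congr 1
  ext i j
  simp

lemma T_smul (z : ℍ) : T • z = (1 : ℝ) +ᵥ z := by
  ext
  rw [coe_smul_eq_div]
  simp [T, add_comm]

lemma T_inv_smul (z : ℍ) : T⁻¹ • z = (-1 : ℝ) +ᵥ z := by
  rw [inv_smul_eq_iff, T_smul, vadd_vadd]
  norm_num

lemma T_zpow_smul (n : ℤ) (z : ℍ) : T ^ n • z = (n : ℝ) +ᵥ z := by
  induction n using Int.induction_on generalizing z with
  | zero => simp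
  | succ n ih =>
    rw [_root_.zpow_add_one, mul_smul, T_smul, ih, vadd_vadd]
    congr 1; push_cast; ring
  | pred n ih =>
    rw [_root_.zpow_sub_one, mul_smul, T_inv_smul, ih, vadd_vadd]
    congr 1; push_cast; ring

lemma dist_le_dist_iff_of_im_eq {z w w' : ℍ} (h : w.im = w'.im) :
    dist z w ≤ dist z w' ↔ |z.re - w.re| ≤ |z.re - w'.re| := by
  have hcosh (u : ℍ) (hu : u.im = w.im) : Real.cosh (dist z u) =
      1 + ((z.re - u.re) ^ 2 + (z.im - w.im) ^ 2) / (2 * z.im * w.im) := by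
    rw [cosh_dist, Complex.dist_eq_re_im, Real.sq_sqrt (by positivity)]
    simp [hu]
  have hpos : 0 < 2 * z.im * w.im := by have := z.im_pos; have := w.im_pos; positivity
  calc dist z w ≤ dist z w' ↔ Real.cosh (dist z w) ≤ Real.cosh (dist z w') := by
        rw [Real.cosh_le_cosh, abs_of_nonneg dist_nonneg, abs_of_nonneg dist_nonneg]
    _ ↔ (z.re - w.re) ^ 2 ≤ (z.re - w'.re) ^ 2 := by
        rw [hcosh w rfl, hcosh w' h.symm, add_le_add_iff_left, div_le_div_iff_of_pos_right hpos,
          add_le_add_iff_right]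
    _ ↔ _ := sq_le_sq

lemma dist_eq_dist_iff_of_im_eq {z w w' : ℍ} (h : w.im = w'.im) :
    dist z w = dist z w' ↔ |z.re - w.re| = |z.re - w'.re| := by
  rw [le_antisymm_iff, le_antisymm_iff, dist_le_dist_iff_of_im_eq h,
    dist_le_dist_iff_of_im_eq h.symm]

lemma IsDiscreteSubgroup.eventually_eq_of_tendsto {Γ : Subgroup SL(2, ℝ)}
    (hΓ : IsDiscreteSubgroup Γ) {g : SL(2, ℝ)} (hg : g ∈ Γ) {ι : Type*} {l : Filter ι}
    {s : ι → SL(2, ℝ)} (hs : ∀ i, s i ∈ Γ)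
    (hlim : Tendsto (fun i => (s i : Matrix (Fin 2) (Fin 2) ℝ)) l (𝓝 g)) :
    ∀ᶠ i in l, s i = g := by
  let _ : TopologicalSpace Γ := TopologicalSpace.induced Subtype.val slTopology
  have : DiscreteTopology Γ := hΓ
  have hlimΓ : Tendsto (fun i => (⟨s i, hs i⟩ : Γ)) l (𝓝 ⟨g, hg⟩) := by
    rw [nhds_induced, slTopology, nhds_induced, comap_comap, tendsto_comap_iff]
    exact hlim
  rw [nhds_discrete, tendsto_pure] at hlimΓ
  exact hlimΓ.mono fun i hi => congrArg Subtype.val hi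

lemma coe_mul_T_mul_inv (A : SL(2, ℝ)) :
    ((A * T * A⁻¹ : SL(2, ℝ)) : Matrix (Fin 2) (Fin 2) ℝ) =
      !![1 - A 0 0 * A 1 0, A 0 0 ^ 2; -(A 1 0 ^ 2), 1 + A 0 0 * A 1 0] := by
  have hdet : A 0 0 * A 1 1 - A 0 1 * A 1 0 = 1 := by
    simpa only [det_fin_two] using A.det_coe
  ext i j
  simp only [Matrix.SpecialLinearGroup.coe_mul, Matrix.mul_apply, Fin.sum_univ_two]
  rw [SpecialLinearGroup.SL2_inv_expl]
  fin_cases i <;> fin_cases j <;> simp [T] <;>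
    [linear_combination hdet; ring; ring; linear_combination hdet]

def iterConjT (g : SL(2, ℝ)) : ℕ → SL(2, ℝ)
  | 0 => g
  | n + 1 => iterConjT g n * T * (iterConjT g n)⁻¹

lemma iterConjT_mem {Γ : Subgroup SL(2, ℝ)} (hT : T ∈ Γ) {g : SL(2, ℝ)} (hg : g ∈ Γ) (n : ℕ) :
    iterConjT g n ∈ Γ := by
  induction n with
  | zero => exact hg
  | succ n ih => exact mul_mem (mul_mem ih hT) (inv_mem ih)

lemma iterConjT_succ_apply (g : SL(2, ℝ)) (n : ℕ) (i j : Fin 2) :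
    iterConjT g (n + 1) i j =
      !![1 - iterConjT g n 0 0 * iterConjT g n 1 0, iterConjT g n 0 0 ^ 2;
        -(iterConjT g n 1 0 ^ 2), 1 + iterConjT g n 0 0 * iterConjT g n 1 0] i j := by
  rw [iterConjT, coe_mul_T_mul_inv]

lemma abs_iterConjT_one_zero (g : SL(2, ℝ)) (n : ℕ) :
    |iterConjT g n 1 0| = |g 1 0| ^ 2 ^ n := by
  induction n with
  | zero => simp [iterConjT]
  | succ n ih => simp [iterConjT_succ_apply, ih, pow_succ, pow_mul]

lemma abs_iterConjT_zero_zero_le {g : SL(2, ℝ)} (hg : |g 1 0| < 1) (n : ℕ) :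
    |iterConjT g n 0 0| ≤ max |g 0 0| (1 - |g 1 0|)⁻¹ := by
  set c := |g 1 0|
  set M := max |g 0 0| (1 - c)⁻¹
  have hMc : 1 + M * c ≤ M := by
    have : 1 ≤ M * (1 - c) := (inv_le_iff_one_le_mul₀ (by linarith)).1 (le_max_right _ _)
    linarith
  induction n with
  | zero => exact le_max_left _ _
  | succ n ih =>
    have hcn : |iterConjT g n 1 0| ≤ c := by
      rw [abs_iterConjT_one_zero]
      exact pow_le_of_le_one (abs_nonneg _) hg.le (by positivity)
    calc |iterConjT g (n + 1) 0 0| = |1 - iterConjT g n 0 0 * iterConjT g n 1 0| := by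
          simp [iterConjT_succ_apply]
      _ ≤ 1 + |iterConjT g n 0 0| * |iterConjT g n 1 0| := by
          simpa [abs_mul] using abs_sub (1 : ℝ) (iterConjT g n 0 0 * iterConjT g n 1 0)
      _ ≤ 1 + M * c := by gcongr
      _ ≤ M := hMc

lemma tendsto_iterConjT {g : SL(2, ℝ)} (hg : |g 1 0| < 1) :
    Tendsto (fun n => (iterConjT g n : Matrix (Fin 2) (Fin 2) ℝ)) atTop (𝓝 T) := by
  have hc : Tendsto (fun n => iterConjT g n 1 0) atTop (𝓝 0) := by
    refine squeeze_zero_norm (fun n => (abs_iterConjT_one_zero g n).le) ?_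
    exact (tendsto_pow_atTop_nhds_zero_of_lt_one (abs_nonneg _) hg).comp
      (tendsto_pow_atTop_atTop_of_one_lt one_lt_two)
  have hac : Tendsto (fun n => iterConjT g n 0 0 * iterConjT g n 1 0) atTop (𝓝 0) := by
    refine squeeze_zero_norm (fun n => ?_)
      (by simpa using hc.norm.const_mul (max |g 0 0| (1 - |g 1 0|)⁻¹))
    rw [norm_mul]
    exact mul_le_mul_of_nonneg_right (abs_iterConjT_zero_zero_le hg n) (norm_nonneg _)
  have ha : Tendsto (fun n => iterConjT g n 0 0) atTop (𝓝 1) := by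
    rw [← tendsto_add_atTop_iff_nat 1]
    simpa [iterConjT_succ_apply] using (tendsto_const_nhds (x := (1 : ℝ))).sub hac
  rw [← tendsto_add_atTop_iff_nat 1]
  refine tendsto_pi_nhds.2 fun i => tendsto_pi_nhds.2 fun j => ?_
  fin_cases i <;> fin_cases j <;> simp only [iterConjT_succ_apply] <;> simp [T]
  · simpa using tendsto_const_nhds.sub hac
  · simpa using ha.pow 2
  · simpa using (hc.pow 2).neg
  · simpa using tendsto_const_nhds.add hac

lemma one_le_abs_one_zero_of_mem {Γ : Subgroup SL(2, ℝ)} (hΓ : IsDiscreteSubgroup Γ) (hT : T ∈ Γ)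
    {g : SL(2, ℝ)} (hg : g ∈ Γ) (hc : g 1 0 ≠ 0) : 1 ≤ |g 1 0| := by
  by_contra! hlt
  obtain ⟨n, hn⟩ :=
    (hΓ.eventually_eq_of_tendsto hT (iterConjT_mem hT hg) (tendsto_iterConjT hlt)).exists
  exact hc (by simpa [hn, T] using (abs_iterConjT_one_zero g n).symm)

lemma mem_fordSet_of_one_le_im {Γ : Subgroup SL(2, ℝ)} (hΓ : IsDiscreteSubgroup Γ) (hT : T ∈ Γ)
    {x₀ : ℝ} {z : ℍ} (hre₀ : x₀ ≤ z.re) (hre₁ : z.re ≤ x₀ + 1) (him : 1 ≤ z.im) :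
    z ∈ fordSet Γ x₀ := by
  refine ⟨hre₀, hre₁, fun g hg hc => ?_⟩
  calc (1 : ℝ) ≤ |g 1 0| * 1 := by simpa using one_le_abs_one_zero_of_mem hΓ hT hg hc
    _ ≤ |g 1 0| * z.im := by gcongr
    _ = |((g 1 0 : ℂ) * z + g 1 1).im| := by simp [abs_mul, abs_of_pos z.im_pos]
    _ ≤ ‖(g 1 0 : ℂ) * z + g 1 1‖ := abs_im_le_norm _

lemma re_eq_of_fordSet_eq_dirichletSet {Γ : Subgroup SL(2, ℝ)} (hΓ : IsDiscreteSubgroup Γ)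
    (hT : T ∈ Γ) {x₀ : ℝ} {z₀ : ℍ} (h : fordSet Γ x₀ = dirichletSet Γ z₀) :
    z₀.re = x₀ + 1 / 2 := by
  have hleft : x₀ +ᵥ UpperHalfPlane.I ∈ dirichletSet Γ z₀ :=
    h ▸ mem_fordSet_of_one_le_im hΓ hT (by simp) (by simp) (by simp)
  have hright : (x₀ + 1) +ᵥ UpperHalfPlane.I ∈ dirichletSet Γ z₀ :=
    h ▸ mem_fordSet_of_one_le_im hΓ hT (by simp) (by simp) (by simp)
  have h₁ := hleft T⁻¹ (inv_mem hT)
  have h₂ := hright T hT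
  rw [T_inv_smul, dist_le_dist_iff_of_im_eq (vadd_im _ _).symm] at h₁
  rw [T_smul, dist_le_dist_iff_of_im_eq (vadd_im _ _).symm] at h₂
  simp only [vadd_re, UpperHalfPlane.I_re, add_zero, ← sq_le_sq] at h₁ h₂
  nlinarith

lemma dist_smul_eq_of_mem_dirichletSet {Γ : Subgroup SL(2, ℝ)} {z₀ : ℍ} {γ : SL(2, ℝ)}
    (hγ : γ ∈ Γ) {v : ℍ} (hv : v ∈ dirichletSet Γ z₀) (hγv : γ • v ∈ dirichletSet Γ z₀) :
    dist (γ • v) z₀ = dist v z₀ := by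
  refine le_antisymm ?_ ?_
  · simpa only [dist_smul] using hγv γ hγ
  · calc dist v z₀ ≤ dist v (γ⁻¹ • z₀) := hv γ⁻¹ (inv_mem hγ)
      _ = dist (γ • v) z₀ := by rw [← dist_smul γ, smul_inv_smul]

lemma norm_denom_eq_one_of_mem_fordSet {Γ : Subgroup SL(2, ℝ)} {x₀ : ℝ} {γ : SL(2, ℝ)}
    (hγ : γ ∈ Γ) (hc : γ 1 0 ≠ 0) {v : ℍ} (hv : v ∈ fordSet Γ x₀) (hγv : γ • v ∈ fordSet Γ x₀) :
    ‖(γ 1 0 * v + γ 1 1 : ℂ)‖ = 1 := by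
  have h₁ := hv.2.2 γ hγ hc
  have h₂ := hγv.2.2 γ⁻¹ (inv_mem hγ) (by simpa [SpecialLinearGroup.SL2_inv_expl] using hc)
  have hprod := congrArg norm (denom_inv_smul_mul_denom γ v)
  rw [norm_mul, norm_one] at hprod
  nlinarith

lemma im_smul_eq_of_mem_fordSet {Γ : Subgroup SL(2, ℝ)}
    (hpar : ∀ g ∈ Γ, g 1 0 = 0 → ∃ n : ℤ, g = T ^ n ∨ g = -(T ^ n)) {x₀ : ℝ} {γ : SL(2, ℝ)}
    (hγ : γ ∈ Γ) {v : ℍ} (hv : v ∈ fordSet Γ x₀) (hγv : γ • v ∈ fordSet Γ x₀) :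
    (γ • v).im = v.im := by
  by_cases hc : γ 1 0 = 0
  · obtain ⟨n, rfl | rfl⟩ := hpar γ hγ hc <;> simp [neg_smul_SL, T_zpow_smul]
  · rw [smul_im_eq_div_norm_sq, norm_denom_eq_one_of_mem_fordSet hγ hc hv hγv]
    simp

/-- Every side-pairing of a DF domain identifies each point of the domain either with
itself or with its mirror image in the vertical line `{Re(z) = x₀ + 1/2}`, preserving
imaginary parts. -/
theorem df_domain_side_pairing_reflection (Γ : Subgroup SL(2, ℝ))
    (hdisc : IsDiscreteSubgroup Γ) (hT : T ∈ Γ)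
    (hpar : ∀ g ∈ Γ, g 1 0 = 0 → ∃ n : ℤ, g = T ^ n ∨ g = -(T ^ n))
    (x₀ : ℝ) (z₀ : ℍ) (h : fordSet Γ x₀ = dirichletSet Γ z₀) :
    ∀ γ ∈ Γ, ∀ v ∈ fordSet Γ x₀, γ • v ∈ fordSet Γ x₀ →
      (γ • v).im = v.im ∧
        ((γ • v).re = v.re ∨ (γ • v).re + v.re = 2 * x₀ + 1) := by
  intro γ hγ v hv hγv
  have him := im_smul_eq_of_mem_fordSet hpar hγ hv hγv
  refine ⟨him, ?_⟩
  have hdist := dist_smul_eq_of_mem_dirichletSet hγ (h ▸ hv) (h ▸ hγv)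
  rw [dist_comm, dist_comm v, dist_eq_dist_iff_of_im_eq him, abs_eq_abs,
    re_eq_of_fordSet_eq_dirichletSet hdisc hT h] at hdist
  rcases hdist with hre | hre
  · left; linarith
  · right; linarith
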